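/- arXiv:2501.11255 — 5 statements merged into one kernel-verified Lean document; each statement's English description precedes it below -/
import Mathlib

section
/- Let f : ℝ → ℝ, let Ω ⊂ ℝ, let V : Ω → ℝ be continuously differentiable, let μ > 0, and let p, q be natural numbers with q ≥ 1. Suppose V′(x)·f(sign(x)·|x|^q) ≤ −μ·|x|^p for all x ∈ Ω. Define Ω̃ := {z ∈ ℝ : sign(z)·|z|^{1/q} ∈ Ω} and Ṽ(z) := V(sign(z)·|z|^{1/q}). Then for all z ∈ Ω̃ \ {0}, the function Ṽ is differentiable at z and Ṽ′(z)·f(z) ≤ −(μ/q)·|z|^{(1+p−q)/q}. -/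
/-!
Write `x = sign z · |z|^{1/q}`. The signed powers with exponents `1/q` and `q` are mutually inverse,
so the hypothesis at `x` reads `V'(x) · f(z) ≤ -μ |x|^p < 0`; in particular `V'(x) ≠ 0`, so `V` is
differentiable at `x`. Away from `0` the signed power `z ↦ sign z · |z|^{1/q}` has derivative
`(1/q) |z|^{1/q - 1} > 0`, and the chain rule together with `|x|^p = |z|^{p/q}` gives the bound.
-/

open Real

noncomputable def signedRpow (x c : ℝ) : ℝ := Real.sign x * |x| ^ c

lemma abs_signedRpow {x : ℝ} (hx : x ≠ 0) (c : ℝ) : |signedRpow x c| = |x| ^ c := by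
  rcases hx.lt_or_gt with hx | hx
  · simp [signedRpow, Real.sign_of_neg hx, abs_of_pos (rpow_pos_of_pos (abs_pos.2 hx.ne) c)]
  · simp [signedRpow, Real.sign_of_pos hx, abs_of_pos (rpow_pos_of_pos (abs_pos.2 hx.ne') c)]

lemma sign_signedRpow (x c : ℝ) : Real.sign (signedRpow x c) = Real.sign x := by
  rcases lt_trichotomy x 0 with hx | rfl | hx
  · have : 0 < |x| ^ c := rpow_pos_of_pos (abs_pos.2 hx.ne) c
    rw [signedRpow, Real.sign_of_neg hx, Real.sign_of_neg (by linarith)]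
  · simp [signedRpow, Real.sign_zero]
  · rw [signedRpow, Real.sign_of_pos hx, one_mul, Real.sign_of_pos (rpow_pos_of_pos (abs_pos.2 hx.ne') c)]

lemma signedRpow_signedRpow {c d : ℝ} (hcd : c * d = 1) (x : ℝ) :
    signedRpow (signedRpow x c) d = x := by
  rcases eq_or_ne x 0 with rfl | hx
  · simp [signedRpow, Real.sign_zero]
  rw [signedRpow, sign_signedRpow, abs_signedRpow hx, ← rpow_mul (abs_nonneg x), hcd, rpow_one]
  rcases hx.lt_or_gt with hx | hx
  · rw [Real.sign_of_neg hx, abs_of_neg hx, neg_one_mul, neg_neg]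
  · rw [Real.sign_of_pos hx, abs_of_pos hx, one_mul]

lemma hasDerivAt_signedRpow {x : ℝ} (hx : x ≠ 0) (c : ℝ) :
    HasDerivAt (signedRpow · c) (c * |x| ^ (c - 1)) x := by
  rcases hx.lt_or_gt with hx | hx
  · have hneg : HasDerivAt (fun w : ℝ => -(-w) ^ c) (c * (-x) ^ (c - 1)) x := by
      simpa [Function.comp_def, Pi.neg_def] using ((hasDerivAt_rpow_const (Or.inl (neg_ne_zero.2 hx.ne))).comp x
        (hasDerivAt_neg x)).neg
    rw [abs_of_neg hx]
    refine hneg.congr_of_eventuallyEq ?_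
    filter_upwards [Iio_mem_nhds hx] with w hw
    rw [signedRpow, Real.sign_of_neg hw, abs_of_neg hw, neg_one_mul]
  · rw [abs_of_pos hx]
    refine (hasDerivAt_rpow_const (Or.inl hx.ne')).congr_of_eventuallyEq ?_
    filter_upwards [Ioi_mem_nhds hx] with w hw
    rw [signedRpow, Real.sign_of_pos hw, abs_of_pos hw, one_mul]

theorem stmt_1_general
    (f V : ℝ → ℝ) (Ω : Set ℝ)
    (μ : ℝ) (hμ : 0 < μ) (p q : ℕ) (hq : 1 ≤ q)
    (hlyap : ∀ x ∈ Ω,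
      deriv V x * f (Real.sign x * |x| ^ (q : ℝ)) ≤ -μ * |x| ^ (p : ℝ)) :
    let Ωt : Set ℝ := {z : ℝ | Real.sign z * |z| ^ (1 / (q : ℝ)) ∈ Ω}
    let Vt : ℝ → ℝ := fun z => V (Real.sign z * |z| ^ (1 / (q : ℝ)))
    ∀ z ∈ Ωt, z ≠ 0 →
      DifferentiableAt ℝ Vt z ∧
      deriv Vt z * f z ≤ -(μ / (q : ℝ)) * |z| ^ ((1 + (p : ℝ) - (q : ℝ)) / (q : ℝ)) := by
  intro Ωt Vt z hz hz0
  have hq0 : (q : ℝ) ≠ 0 := Nat.cast_ne_zero.2 (by omega)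
  have hzpos : 0 < |z| := abs_pos.2 hz0
  set x := signedRpow z (1 / q)
  have hxz : signedRpow x q = z := signedRpow_signedRpow (by field_simp) z
  have hbound : deriv V x * f z ≤ -μ * |x| ^ (p : ℝ) := hxz ▸ hlyap x hz
  have hdV : DifferentiableAt ℝ V x := by
    refine differentiableAt_of_deriv_ne_zero fun h => ?_
    have : 0 < |x| ^ (p : ℝ) := rpow_pos_of_pos (abs_signedRpow hz0 _ ▸ rpow_pos_of_pos hzpos _) _
    rw [h, zero_mul] at hbound
    nlinarith
  have hVt : HasDerivAt Vt (deriv V x * (1 / q * |z| ^ (1 / q - 1 : ℝ))) z :=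
    hdV.hasDerivAt.comp z (hasDerivAt_signedRpow hz0 _)
  refine ⟨hVt.differentiableAt, ?_⟩
  rw [hVt.deriv]
  calc deriv V x * (1 / q * |z| ^ (1 / q - 1 : ℝ)) * f z
      = (deriv V x * f z) * (1 / q * |z| ^ (1 / q - 1 : ℝ)) := by ring
    _ ≤ (-μ * |x| ^ (p : ℝ)) * (1 / q * |z| ^ (1 / q - 1 : ℝ)) := by gcongr
    _ = -(μ / q) * (|z| ^ (p / q : ℝ) * |z| ^ (1 / q - 1 : ℝ)) := by
        rw [abs_signedRpow hz0, ← rpow_mul hzpos.le]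
        ring_nf
    _ = -(μ / q) * |z| ^ ((1 + (p : ℝ) - q) / q) := by
        rw [← rpow_add hzpos]
        congr 2
        field_simp
        ring

/-- scalar derivative computation along the change of variables.
If `V'(x)·f(sign(x)·|x|^q) ≤ -μ·|x|^p` on `Ω`, then `Ṽ(z) = V(sign(z)·|z|^{1/q})` is
differentiable at every nonzero `z ∈ Ω̃` and `Ṽ'(z)·f(z) ≤ -(μ/q)·|z|^{(1+p-q)/q}`. -/
theorem stmt_1
    (f V : ℝ → ℝ) (Ω : Set ℝ)
    (hV : ContDiffOn ℝ 1 V Ω)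
    (μ : ℝ) (hμ : 0 < μ) (p q : ℕ) (hq : 1 ≤ q)
    (hlyap : ∀ x ∈ Ω,
      deriv V x * f (Real.sign x * |x| ^ (q : ℝ)) ≤ -μ * |x| ^ (p : ℝ)) :
    let Ωt : Set ℝ := {z : ℝ | Real.sign z * |z| ^ (1 / (q : ℝ)) ∈ Ω}
    let Vt : ℝ → ℝ := fun z => V (Real.sign z * |z| ^ (1 / (q : ℝ)))
    ∀ z ∈ Ωt, z ≠ 0 →
      DifferentiableAt ℝ Vt z ∧
      deriv Vt z * f z ≤ -(μ / (q : ℝ)) * |z| ^ ((1 + (p : ℝ) - (q : ℝ)) / (q : ℝ)) :=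
  stmt_1_general f V Ω μ hμ p q hq hlyap
end

section
/- Let D ⊆ ℝⁿ, let f : D → ℝⁿ be continuous, let Ω ⊆ D contain an open neighborhood of the origin, and let V : Ω → ℝ be positive definite (V(0) = 0 and V(x) > 0 for x ∈ Ω \ {0}) and continuously differentiable on Ω \ {0}. Suppose there exist μ > 0 and γ ∈ (0, 1) such that ∇V(x)ᵀ f(x) + μ·V(x)^γ ≤ 0 for all x ∈ Ω \ {0}. Then for every T > 0 and every continuously differentiable curve x : [0, T) → ℝⁿ satisfying x′(t) = f(x(t)) and x(t) ∈ Ω \ {0} for all t ∈ [0, T), it holds that T ≤ (1/(μ·(1−γ)))·V(x(0))^{1−γ}. -/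
/-! Along a trajectory, `W t = V (x t) ^ (1 - γ)` satisfies `W' = (1 - γ) V^(-γ) V' ≤ -μ (1 - γ)`,
so `W t + μ (1 - γ) t` is nonincreasing. As `W > 0` as long as the trajectory avoids the origin,
`μ (1 - γ) t < W 0` for every `t < T`. -/

open Set

theorem differentiableAt_of_fderiv_apply_ne_zero {𝕜 E F : Type*} [NontriviallyNormedField 𝕜]
    [NormedAddCommGroup E] [NormedSpace 𝕜 E] [NormedAddCommGroup F] [NormedSpace 𝕜 F]
    {V : E → F} {x v : E} (h : fderiv 𝕜 V x v ≠ 0) : DifferentiableAt 𝕜 V x := by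
  by_contra hV
  exact h (by simp [fderiv_zero_of_not_differentiableAt hV])

section FiniteTime

variable {g g' : ℝ → ℝ} {μ γ : ℝ}

theorem antitoneOn_rpow_add_mul_of_deriv_add_mul_rpow_nonpos {s : Set ℝ} (hs : Convex ℝ s)
    (hγ : γ ≤ 1) (hg : ∀ t ∈ s, HasDerivWithinAt g (g' t) s t) (hpos : ∀ t ∈ s, 0 < g t)
    (hdecay : ∀ t ∈ s, g' t + μ * g t ^ γ ≤ 0) :
    AntitoneOn (fun t ↦ g t ^ (1 - γ) + μ * (1 - γ) * t) s := by
  have hderiv : ∀ t ∈ s, HasDerivWithinAt (fun t ↦ g t ^ (1 - γ) + μ * (1 - γ) * t)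
      (g' t * (1 - γ) * g t ^ (1 - γ - 1) + μ * (1 - γ)) s t := fun t ht ↦
    ((hg t ht).rpow_const (.inl (hpos t ht).ne')).add
      ((hasDerivWithinAt_id t s).const_mul _ |>.congr_deriv (mul_one _))
  refine antitoneOn_of_hasDerivWithinAt_nonpos hs
    (fun t ht ↦ (hderiv t ht).continuousWithinAt)
    (fun t ht ↦ (hderiv t (interior_subset ht)).mono interior_subset) fun t ht ↦ ?_
  have ht := interior_subset ht
  have hgt := hpos t ht
  calc g' t * (1 - γ) * g t ^ (1 - γ - 1) + μ * (1 - γ)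
      = (1 - γ) * g t ^ (-γ) * (g' t + μ * g t ^ γ) := by
        rw [show 1 - γ - 1 = -γ by ring, mul_add, Real.rpow_neg hgt.le]
        field_simp [(Real.rpow_pos_of_pos hgt γ).ne']
    _ ≤ 0 := mul_nonpos_of_nonneg_of_nonpos
        (mul_nonneg (by linarith) (Real.rpow_nonneg hgt.le _)) (hdecay t ht)

theorem le_one_div_mul_rpow_of_deriv_add_mul_rpow_nonpos {T : ℝ} (hT : 0 < T) (hμ : 0 < μ)
    (hγ : γ < 1) (hg : ∀ t ∈ Ico 0 T, HasDerivWithinAt g (g' t) (Ico 0 T) t)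
    (hpos : ∀ t ∈ Ico 0 T, 0 < g t) (hdecay : ∀ t ∈ Ico 0 T, g' t + μ * g t ^ γ ≤ 0) :
    T ≤ 1 / (μ * (1 - γ)) * g 0 ^ (1 - γ) := by
  have hc : 0 < μ * (1 - γ) := mul_pos hμ (by linarith)
  have h0 : (0 : ℝ) ∈ Ico 0 T := ⟨le_rfl, hT⟩
  have hanti := antitoneOn_rpow_add_mul_of_deriv_add_mul_rpow_nonpos (convex_Ico 0 T) hγ.le hg
    hpos hdecay
  rw [one_div_mul_eq_div]
  refine le_of_forall_lt_imp_le_of_dense fun t htT ↦ ?_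
  rw [le_div_iff₀' hc]
  rcases lt_or_ge t 0 with ht0 | ht0
  · have : 0 < g 0 ^ (1 - γ) := Real.rpow_pos_of_pos (hpos 0 h0) _
    nlinarith
  · have hmono := hanti h0 ⟨ht0, htT⟩ ht0
    have : 0 < g t ^ (1 - γ) := Real.rpow_pos_of_pos (hpos t ⟨ht0, htT⟩) _
    simp only [mul_zero, add_zero] at hmono
    linarith

end FiniteTime

theorem stmt_6_general {n : ℕ}
    (Ω : Set (EuclideanSpace ℝ (Fin n)))
    (f : EuclideanSpace ℝ (Fin n) → EuclideanSpace ℝ (Fin n))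
    (V : EuclideanSpace ℝ (Fin n) → ℝ)
    (hVpos : ∀ x ∈ Ω, x ≠ 0 → 0 < V x)
    (μ γ : ℝ) (hμ : 0 < μ) (hγ : γ ∈ Set.Ioo (0 : ℝ) 1)
    (hlyap : ∀ x ∈ Ω, x ≠ 0 → fderiv ℝ V x (f x) + μ * V x ^ γ ≤ 0) :
    ∀ (T : ℝ), 0 < T →
      ∀ x : ℝ → EuclideanSpace ℝ (Fin n),
        ContDiffOn ℝ 1 x (Set.Ico 0 T) →
        (∀ t ∈ Set.Ico (0 : ℝ) T, HasDerivWithinAt x (f (x t)) (Set.Ico 0 T) t) →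
        (∀ t ∈ Set.Ico (0 : ℝ) T, x t ∈ Ω ∧ x t ≠ 0) →
        T ≤ (1 / (μ * (1 - γ))) * V (x 0) ^ (1 - γ) := by
  intro T hT x _ hx hxΩ
  have hpos : ∀ t ∈ Ico 0 T, 0 < V (x t) := fun t ht ↦ hVpos _ (hxΩ t ht).1 (hxΩ t ht).2
  have hdecay : ∀ t ∈ Ico 0 T, fderiv ℝ V (x t) (f (x t)) + μ * V (x t) ^ γ ≤ 0 :=
    fun t ht ↦ hlyap _ (hxΩ t ht).1 (hxΩ t ht).2
  -- Differentiability of `V` at `x t` is forced by `hdecay`: otherwise `fderiv ℝ V (x t)` is the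
  -- junk value `0`, and `hdecay` would give `μ * V (x t) ^ γ ≤ 0`.
  have hderiv : ∀ t ∈ Ico 0 T,
      HasDerivWithinAt (fun s ↦ V (x s)) (fderiv ℝ V (x t) (f (x t))) (Ico 0 T) t := by
    intro t ht
    have hneg : fderiv ℝ V (x t) (f (x t)) < 0 := by
      have := mul_pos hμ (Real.rpow_pos_of_pos (hpos t ht) γ)
      linarith [hdecay t ht]
    exact (differentiableAt_of_fderiv_apply_ne_zero hneg.ne).hasFDerivAt.comp_hasDerivWithinAt t
      (hx t ht)
  exact le_one_div_mul_rpow_of_deriv_add_mul_rpow_nonpos hT hμ hγ.2 hderiv hpos hdecay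

/-- Lyapunov characterization of finite-time stability at solution level,
Thm. 1 of the paper / Bhat–Bernstein. -/
theorem stmt_6 {n : ℕ}
    (D Ω : Set (EuclideanSpace ℝ (Fin n)))
    (f : EuclideanSpace ℝ (Fin n) → EuclideanSpace ℝ (Fin n))
    (V : EuclideanSpace ℝ (Fin n) → ℝ)
    (hΩD : Ω ⊆ D) (hf : ContinuousOn f D)
    (hΩnhds : Ω ∈ nhds (0 : EuclideanSpace ℝ (Fin n)))
    (hV : ContDiffOn ℝ 1 V (Ω \ {0}))
    (hV0 : V 0 = 0)
    (hVpos : ∀ x ∈ Ω, x ≠ 0 → 0 < V x)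
    (μ γ : ℝ) (hμ : 0 < μ) (hγ : γ ∈ Set.Ioo (0 : ℝ) 1)
    (hlyap : ∀ x ∈ Ω, x ≠ 0 → fderiv ℝ V x (f x) + μ * V x ^ γ ≤ 0) :
    ∀ (T : ℝ), 0 < T →
      ∀ x : ℝ → EuclideanSpace ℝ (Fin n),
        ContDiffOn ℝ 1 x (Set.Ico 0 T) →
        (∀ t ∈ Set.Ico (0 : ℝ) T, HasDerivWithinAt x (f (x t)) (Set.Ico 0 T) t) →
        (∀ t ∈ Set.Ico (0 : ℝ) T, x t ∈ Ω ∧ x t ≠ 0) →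
        T ≤ (1 / (μ * (1 - γ))) * V (x 0) ^ (1 - γ) :=
  stmt_6_general Ω f V hVpos μ γ hμ hγ hlyap
end

section
/- Let T > 0, μ > 0, and γ ∈ (0, 1). Suppose v : [0, T) → ℝ is differentiable and satisfies v(t) > 0 and v′(t) ≤ −μ·v(t)^γ for all t ∈ [0, T). Then T ≤ v(0)^{1−γ}/(μ·(1−γ)). -/
/-!
The function `t ↦ v t ^ (1 - γ) + μ (1 - γ) t` is nonincreasing, since by the chain rule its
derivative is `(1 - γ) v ^ (-γ) v' + μ (1 - γ) ≤ 0`. Comparing its values at `0` and at `t`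
gives `μ (1 - γ) t < v 0 ^ (1 - γ)` for every `t ∈ [0, T)`, which fails at
`t = v 0 ^ (1 - γ) / (μ (1 - γ))` if that time were smaller than `T`.
-/

open Set

lemma rpow_one_sub_chain_le {x d μ γ : ℝ} (hx : 0 < x) (hγ : γ ≤ 1)
    (hd : d ≤ -μ * x ^ γ) :
    d * (1 - γ) * x ^ (1 - γ - 1) ≤ -(μ * (1 - γ)) := by
  have hpow : 0 ≤ x ^ (1 - γ - 1) := (Real.rpow_pos_of_pos hx _).le
  calc d * (1 - γ) * x ^ (1 - γ - 1)
      ≤ -μ * x ^ γ * (1 - γ) * x ^ (1 - γ - 1) := by gcongr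
    _ = -(μ * (1 - γ)) * x ^ (γ + (1 - γ - 1)) := by rw [Real.rpow_add hx]; ring
    _ = -(μ * (1 - γ)) := by norm_num

lemma antitoneOn_rpow_one_sub_add_mul {D : Set ℝ} (hD : Convex ℝ D) {v : ℝ → ℝ} {μ γ : ℝ}
    (hγ : γ ≤ 1) (hdiff : ∀ t ∈ D, DifferentiableWithinAt ℝ v D t)
    (hpos : ∀ t ∈ D, 0 < v t) (hineq : ∀ t ∈ D, derivWithin v D t ≤ -μ * v t ^ γ) :
    AntitoneOn (fun t ↦ v t ^ (1 - γ) + μ * (1 - γ) * t) D := by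
  have hderiv : ∀ t ∈ D, HasDerivWithinAt (fun t ↦ v t ^ (1 - γ) + μ * (1 - γ) * t)
      (derivWithin v D t * (1 - γ) * v t ^ (1 - γ - 1) + μ * (1 - γ)) D t := fun t ht ↦ by
    have h := ((hdiff t ht).hasDerivWithinAt.rpow_const (p := 1 - γ)
      (Or.inl (hpos t ht).ne')).add ((hasDerivWithinAt_id t D).const_mul (μ * (1 - γ)))
    rwa [mul_one] at h
  refine antitoneOn_of_hasDerivWithinAt_nonpos hD (fun t ht ↦ (hderiv t ht).continuousWithinAt)
    (fun t ht ↦ (hderiv t (interior_subset ht)).mono interior_subset) fun t ht ↦ ?_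
  have ht := interior_subset ht
  linarith [rpow_one_sub_chain_le (hpos t ht) hγ (hineq t ht)]

/-- scalar comparison lemma bounding the time horizon. -/
theorem stmt_7
    (T μ γ : ℝ) (hT : 0 < T) (hμ : 0 < μ) (hγ : γ ∈ Set.Ioo (0 : ℝ) 1)
    (v : ℝ → ℝ)
    (hdiff : ∀ t ∈ Set.Ico (0 : ℝ) T, DifferentiableWithinAt ℝ v (Set.Ico 0 T) t)
    (hpos : ∀ t ∈ Set.Ico (0 : ℝ) T, 0 < v t)
    (hineq : ∀ t ∈ Set.Ico (0 : ℝ) T,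
      derivWithin v (Set.Ico 0 T) t ≤ -μ * v t ^ γ) :
    T ≤ v 0 ^ (1 - γ) / (μ * (1 - γ)) := by
  have hc : 0 < μ * (1 - γ) := mul_pos hμ (by linarith [hγ.2])
  have hanti := antitoneOn_rpow_one_sub_add_mul (convex_Ico 0 T) hγ.2.le hdiff hpos hineq
  have h0 : (0 : ℝ) ∈ Ico 0 T := ⟨le_rfl, hT⟩
  by_contra! hlt
  set K := v 0 ^ (1 - γ) / (μ * (1 - γ))
  have hK : K ∈ Ico 0 T := ⟨by have := hpos 0 h0; positivity, hlt⟩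
  have hcomp := hanti h0 hK hK.1
  have hvK : 0 < v K ^ (1 - γ) := Real.rpow_pos_of_pos (hpos K hK) _
  have hcK : μ * (1 - γ) * K = v 0 ^ (1 - γ) := mul_div_cancel₀ _ hc.ne'
  simp only [mul_zero, add_zero] at hcomp
  linarith
end

section
/- Let f : ℝⁿ → ℝⁿ, let q ∈ ℕⁿ with q_i ≥ 1 for all i, let λ ∈ ℕⁿ, let μ > 0, let p be a natural number, let Ω ⊆ ℝⁿ, let V be a real polynomial in n variables, and let g₁, …, g_m be real polynomials with g_i(x) ≥ 0 for all x ∈ Ω and all i. Define f̃_i(z) := (1/q_i)·f_i(z)·|z_i|^{1/q_i − 1}. Suppose there exist polynomials t₁, …, t_m, each a sum of squares of polynomials, and polynomials h₁, …, h_N such that for all x ∈ ℝⁿ with x_i ≠ 0 for every i, −∇V(x)ᵀ f̃(sign(x)·|x|^q)·∏_{i=1}^n |x_i|^{λ_i} − μ·‖x‖^p·∏_{i=1}^n |x_i|^{λ_i} − Σ_{j=1}^m t_j(x)·g_j(x) = Σ_{l=1}^N h_l(x)². Then ∇V(x)ᵀ f̃(sign(x)·|x|^q) ≤ −μ·‖x‖^p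 for every x ∈ Ω with x_i ≠ 0 for all i. -/
/-! The certificate says that `(-∇V·f̃ - μ‖x‖ᵖ) · ∏ |xᵢ|^λᵢ` equals `Σ tⱼ gⱼ + Σ hₗ²`. On `Ω` the right side
is nonnegative, since SoS polynomials and the `gⱼ` are, and away from the coordinate hyperplanes the
weight `∏ |xᵢ|^λᵢ` is positive, so it can be divided out. -/

def IsSumOfSquares' {n : ℕ} (s : MvPolynomial (Fin n) ℝ) : Prop :=
  ∃ (N : ℕ) (h : Fin N → MvPolynomial (Fin n) ℝ), s = ∑ l, (h l) ^ 2

theorem IsSumOfSquares'.eval_nonneg {n : ℕ} {s : MvPolynomial (Fin n) ℝ} (hs : IsSumOfSquares' s)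
    (x : Fin n → ℝ) : 0 ≤ MvPolynomial.eval x s := by
  obtain ⟨N, h, rfl⟩ := hs
  simp only [map_sum, map_pow]
  exact Finset.sum_nonneg fun l _ => sq_nonneg _

theorem prod_abs_pow_pos {ι : Type*} {s : Finset ι} {x : ι → ℝ} (hx : ∀ i, x i ≠ 0) (k : ι → ℕ) :
    0 < ∏ i ∈ s, |x i| ^ k i :=
  Finset.prod_pos fun i _ => pow_pos (abs_pos.mpr (hx i)) _

theorem stmt_13_general {n m N : ℕ}
    (q lam : Fin n → ℕ)
    (μ : ℝ) (p : ℕ)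
    (Ω : Set (Fin n → ℝ))
    (V : MvPolynomial (Fin n) ℝ)
    (g : Fin m → MvPolynomial (Fin n) ℝ)
    (hg : ∀ x ∈ Ω, ∀ j, 0 ≤ MvPolynomial.eval x (g j))
    (ftil : (Fin n → ℝ) → (Fin n → ℝ))
    (t : Fin m → MvPolynomial (Fin n) ℝ) (ht : ∀ j, IsSumOfSquares' (t j))
    (h : Fin N → MvPolynomial (Fin n) ℝ)
    (hcert : ∀ x : Fin n → ℝ, (∀ i, x i ≠ 0) →
      -(∑ i, MvPolynomial.eval x (MvPolynomial.pderiv i V) *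
            ftil (fun i => Real.sign (x i) * |x i| ^ (q i : ℝ)) i) * (∏ i, |x i| ^ lam i)
        - μ * Real.sqrt (∑ i, x i ^ 2) ^ p * (∏ i, |x i| ^ lam i)
        - ∑ j, MvPolynomial.eval x (t j) * MvPolynomial.eval x (g j)
      = ∑ l, MvPolynomial.eval x (h l) ^ 2) :
    ∀ x ∈ Ω, (∀ i, x i ≠ 0) →
      (∑ i, MvPolynomial.eval x (MvPolynomial.pderiv i V) *
          ftil (fun i => Real.sign (x i) * |x i| ^ (q i : ℝ)) i)
        ≤ -μ * Real.sqrt (∑ i, x i ^ 2) ^ p := by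
  intro x hx hx0
  set A := ∑ i, MvPolynomial.eval x (MvPolynomial.pderiv i V) *
      ftil (fun i => Real.sign (x i) * |x i| ^ (q i : ℝ)) i
  have hweight : 0 < ∏ i, |x i| ^ lam i := prod_abs_pow_pos hx0 lam
  have hmultipliers : 0 ≤ ∑ j, MvPolynomial.eval x (t j) * MvPolynomial.eval x (g j) :=
    Finset.sum_nonneg fun j _ => mul_nonneg ((ht j).eval_nonneg x) (hg x hx j)
  have hsquares : 0 ≤ ∑ l, MvPolynomial.eval x (h l) ^ 2 :=
    Finset.sum_nonneg fun l _ => sq_nonneg _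
  have hweighted : 0 ≤ (-A - μ * Real.sqrt (∑ i, x i ^ 2) ^ p) * ∏ i, |x i| ^ lam i := by
    linear_combination hmultipliers + hsquares - hcert x hx0
  linarith [nonneg_of_mul_nonneg_left hweighted hweight]

/-- the SoS certificate (8) of the paper implies the gradient
inequality on `Ω` away from the coordinate hyperplanes. Here `‖x‖` is the Euclidean
norm `√(Σ xᵢ²)`, the gradient of the polynomial `V` is given by its partial derivatives,
and `f̃ᵢ(z) = (1/qᵢ)·fᵢ(z)·|zᵢ|^{1/qᵢ − 1}`. -/
theorem stmt_13 {n m N : ℕ}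
    (f : (Fin n → ℝ) → (Fin n → ℝ))
    (q lam : Fin n → ℕ) (hq : ∀ i, 1 ≤ q i)
    (μ : ℝ) (hμ : 0 < μ) (p : ℕ)
    (Ω : Set (Fin n → ℝ))
    (V : MvPolynomial (Fin n) ℝ)
    (g : Fin m → MvPolynomial (Fin n) ℝ)
    (hg : ∀ x ∈ Ω, ∀ j, 0 ≤ MvPolynomial.eval x (g j))
    (ftil : (Fin n → ℝ) → (Fin n → ℝ))
    (hftil : ∀ z i, ftil z i = (1 / (q i : ℝ)) * f z i * |z i| ^ (1 / (q i : ℝ) - 1))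
    (t : Fin m → MvPolynomial (Fin n) ℝ) (ht : ∀ j, IsSumOfSquares' (t j))
    (h : Fin N → MvPolynomial (Fin n) ℝ)
    (hcert : ∀ x : Fin n → ℝ, (∀ i, x i ≠ 0) →
      -(∑ i, MvPolynomial.eval x (MvPolynomial.pderiv i V) *
            ftil (fun i => Real.sign (x i) * |x i| ^ (q i : ℝ)) i) * (∏ i, |x i| ^ lam i)
        - μ * Real.sqrt (∑ i, x i ^ 2) ^ p * (∏ i, |x i| ^ lam i)
        - ∑ j, MvPolynomial.eval x (t j) * MvPolynomial.eval x (g j)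
      = ∑ l, MvPolynomial.eval x (h l) ^ 2) :
    ∀ x ∈ Ω, (∀ i, x i ≠ 0) →
      (∑ i, MvPolynomial.eval x (MvPolynomial.pderiv i V) *
          ftil (fun i => Real.sign (x i) * |x i| ^ (q i : ℝ)) i)
        ≤ -μ * Real.sqrt (∑ i, x i ^ 2) ^ p :=
  stmt_13_general q lam μ p Ω V g hg ftil t ht h hcert
end

section
/- Define f : ℝ → ℝ by f(z) := −sign(z)·|z|^{2/3}. Then for every T > 0 and every continuously differentiable curve x : [0, T) → ℝ satisfying x′(t) = f(x(t)) and x(t) ≠ 0 for all t ∈ [0, T), it holds that T ≤ 3.62·|x(0)|^{1/3}. -/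
/-!
Away from the origin, `|x|^{1/3}` has derivative `(1/3)|x|^{-2/3}·sign(x)·x' = -1/3` along the flow,
so `|x(t)|^{1/3} = |x(0)|^{1/3} - t/3`. Positivity of the left side on `[0, T)` forces
`T ≤ 3|x(0)|^{1/3}`, and `3 ≤ 3.62`.
-/

open Set

theorem Real.sign_eq_signType_sign (r : ℝ) : Real.sign r = SignType.sign r := by
  rcases lt_trichotomy r 0 with h | rfl | h
  · simp [Real.sign_of_neg h, h]
  · simp [Real.sign_zero]
  · simp [Real.sign_of_pos h, h]

theorem Real.sign_mul_self_of_ne_zero {r : ℝ} (hr : r ≠ 0) : Real.sign r * Real.sign r = 1 := by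
  rcases Real.sign_apply_eq_of_ne_zero r hr with h | h <;> simp [h]

theorem HasDerivWithinAt.abs_of_ne_zero {x : ℝ → ℝ} {x' t : ℝ} {s : Set ℝ}
    (hx : HasDerivWithinAt x x' s t) (ht : x t ≠ 0) :
    HasDerivWithinAt (fun u => |x u|) (Real.sign (x t) * x') s t := by
  rw [Real.sign_eq_signType_sign]
  exact (hasDerivAt_abs ht).comp_hasDerivWithinAt t hx

theorem HasDerivWithinAt.abs_rpow_of_sign_mul_rpow {x : ℝ → ℝ} {s : Set ℝ} {t p : ℝ}
    (hx : HasDerivWithinAt x (-(Real.sign (x t) * |x t| ^ (1 - p))) s t) (ht : x t ≠ 0) :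
    HasDerivWithinAt (fun u => |x u| ^ p) (-p) s t := by
  have habs : 0 < |x t| := abs_pos.mpr ht
  convert (hx.abs_of_ne_zero ht).rpow_const (p := p) (Or.inl habs.ne') using 1
  have hpow : |x t| ^ (p - 1) * |x t| ^ (1 - p) = 1 := by
    rw [← Real.rpow_add habs]; simp
  linear_combination p * (Real.sign (x t) * Real.sign (x t)) * hpow
    + p * Real.sign_mul_self_of_ne_zero ht

theorem Convex.eq_add_mul_sub_of_hasDerivWithinAt {g : ℝ → ℝ} {s : Set ℝ} {c a b : ℝ}
    (hs : Convex ℝ s) (hg : ∀ t ∈ s, HasDerivWithinAt g c s t) (ha : a ∈ s) (hb : b ∈ s) :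
    g b = g a + c * (b - a) := by
  have hzero : ∀ t ∈ s, HasDerivWithinAt (fun u => g u - c * u) 0 s t := fun t ht => by
    simpa using (hg t ht).fun_sub ((hasDerivWithinAt_id t s).const_mul c)
  have := hs.norm_image_sub_le_of_norm_hasDerivWithin_le (C := 0) hzero
    (fun _ _ => by simp) ha hb
  rw [zero_mul, norm_le_zero_iff, sub_eq_zero] at this
  linarith

/-- settling-time bound for Example 1 of the paper: any C¹ solution of
`x' = −sign(x)·|x|^{2/3}` that stays away from the origin on `[0, T)` satisfies
`T ≤ 3.62·|x(0)|^{1/3}`. -/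
theorem stmt_17 :
    let f : ℝ → ℝ := fun z => -(Real.sign z * |z| ^ ((2 : ℝ) / 3))
    ∀ (T : ℝ), 0 < T →
      ∀ x : ℝ → ℝ,
        ContDiffOn ℝ 1 x (Set.Ico 0 T) →
        (∀ t ∈ Set.Ico (0 : ℝ) T, HasDerivWithinAt x (f (x t)) (Set.Ico 0 T) t) →
        (∀ t ∈ Set.Ico (0 : ℝ) T, x t ≠ 0) →
        T ≤ 3.62 * |x 0| ^ ((1 : ℝ) / 3) := by
  intro f T hT x _ hderiv hne
  have h0 : (0 : ℝ) ∈ Ico 0 T := ⟨le_rfl, hT⟩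
  have hdecay : ∀ t ∈ Ico 0 T,
      HasDerivWithinAt (fun u => |x u| ^ ((1 : ℝ) / 3)) (-(1 / 3)) (Ico 0 T) t :=
    fun t ht => HasDerivWithinAt.abs_rpow_of_sign_mul_rpow
      (by simpa [f, show (2 : ℝ) / 3 = 1 - 1 / 3 by norm_num] using hderiv t ht) (hne t ht)
  have hT3 : T ≤ 3 * |x 0| ^ ((1 : ℝ) / 3) := by
    by_contra! hlt
    have hmem : 3 * |x 0| ^ ((1 : ℝ) / 3) ∈ Ico 0 T := ⟨by positivity, hlt⟩
    have hpos := Real.rpow_pos_of_pos (abs_pos.mpr (hne _ hmem)) ((1 : ℝ) / 3)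
    rw [(convex_Ico 0 T).eq_add_mul_sub_of_hasDerivWithinAt hdecay h0 hmem] at hpos
    linarith
  linarith [Real.rpow_nonneg (abs_nonneg (x 0)) ((1 : ℝ) / 3)]
end
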